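/- For any graph G without isolated vertices and any non-negative integer p, the Staller p-pass game domination number satisfies \gamma_g^{St,p}(G) \le \gamma_g(G) + p. -/
import Mathlib


open Finset
open scoped Classical

variable {V : Type*}

/-- The closed neighborhood `N[v]` of a vertex, as a finset. -/
noncomputable def closedNbhd [Fintype V] (G : SimpleGraph V) (v : V) : Finset V :=
  Finset.univ.filter (fun u => u = v ∨ G.Adj v u)

/-- The legal moves in the domination game when `D` is the set of dominated vertices:
vertices whose closed neighborhood is not already dominated. -/
noncomputable def legalMoves [Fintype V] (G : SimpleGraph V) (D : Finset V) : Finset V :=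
  Finset.univ.filter (fun v => ¬ closedNbhd G v ⊆ D)

lemma legalMoves_nonempty [Fintype V] (G : SimpleGraph V) {D : Finset V}
    (h : D ≠ Finset.univ) : (legalMoves G D).Nonempty := by
  obtain ⟨v, hv⟩ : ∃ v, v ∉ D := by
    by_contra hc
    push_neg at hc
    exact h (Finset.eq_univ_iff_forall.2 hc)
  refine ⟨v, ?_⟩
  simp only [legalMoves, Finset.mem_filter, Finset.mem_univ, true_and]
  intro hsub
  exact hv (hsub (by simp [closedNbhd]))

lemma card_lt_of_legal [Fintype V] (G : SimpleGraph V) {D : Finset V} {v : V}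
    (hv : v ∈ legalMoves G D) :
    (Finset.univ \ (D ∪ closedNbhd G v)).card < (Finset.univ \ D).card := by
  simp only [legalMoves, Finset.mem_filter, Finset.mem_univ, true_and] at hv
  obtain ⟨u, hu1, hu2⟩ := Finset.not_subset.1 hv
  apply Finset.card_lt_card
  constructor
  · exact Finset.sdiff_subset_sdiff (le_refl _) Finset.subset_union_left
  · intro hsub
    have := hsub (Finset.mem_sdiff.2 ⟨Finset.mem_univ u, hu2⟩)
    simp only [Finset.mem_sdiff, Finset.mem_union] at this
    exact this.2 (Or.inr hu1)

/-- Optimal number of moves in the domination game on the partially dominated graph `G|D`;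
`turn = true` means Dominator (the minimizer) moves next, `turn = false` means Staller
(the maximizer) moves next.  Every move must dominate a not-yet-dominated vertex and the
game ends when all vertices are dominated. -/
noncomputable def gameVal [Fintype V] (G : SimpleGraph V) : Bool → Finset V → ℕ
  | turn, D =>
    if h : D = Finset.univ then 0
    else
      have hne : (legalMoves G D).attach.Nonempty :=
        (Finset.attach_nonempty_iff).2 (legalMoves_nonempty G h)
      if turn then
        1 + (legalMoves G D).attach.inf' hne
          (fun v => gameVal G false (D ∪ closedNbhd G v.1))
      else
        1 + (legalMoves G D).attach.sup' hne
          (fun v => gameVal G true (D ∪ closedNbhd G v.1))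
  termination_by turn D => (Finset.univ \ D).card
  decreasing_by all_goals exact card_lt_of_legal G v.2

/-- The Dominator-start game domination number `γ_g(G|S)` of the partially dominated graph. -/
noncomputable def gammaG [Fintype V] (G : SimpleGraph V) (S : Finset V) : ℕ :=
  gameVal G true S

/-- The Staller-start game domination number `γ_g'(G|S)` of the partially dominated graph. -/
noncomputable def gammaG' [Fintype V] (G : SimpleGraph V) (S : Finset V) : ℕ :=
  gameVal G false S

/-- Optimal number of (non-pass) moves in the Staller `p`-pass domination game on `G|D`:
the Dominator-start game in which Staller may additionally pass at most `p` times. -/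
noncomputable def passVal [Fintype V] (G : SimpleGraph V) : Bool → ℕ → Finset V → ℕ
  | turn, p, D =>
    if h : D = Finset.univ then 0
    else
      have hne : (legalMoves G D).attach.Nonempty :=
        (Finset.attach_nonempty_iff).2 (legalMoves_nonempty G h)
      if turn then
        1 + (legalMoves G D).attach.inf' hne
          (fun v => passVal G false p (D ∪ closedNbhd G v.1))
      else
        match p with
        | 0 =>
          1 + (legalMoves G D).attach.sup' hne
            (fun v => passVal G true 0 (D ∪ closedNbhd G v.1))
        | q + 1 =>
          max
            (1 + (legalMoves G D).attach.sup' hne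
              (fun v => passVal G true (q + 1) (D ∪ closedNbhd G v.1)))
            (passVal G true q D)
  termination_by turn p D => ((Finset.univ \ D).card, p)
  decreasing_by
  · exact Prod.Lex.left _ _ (card_lt_of_legal G v.2)
  · exact Prod.Lex.left _ _ (card_lt_of_legal G v.2)
  · exact Prod.Lex.left _ _ (card_lt_of_legal G v.2)
  · exact Prod.Lex.right _ (Nat.lt_succ_self q)

/-- `γ_g^{St,p}(G)`: the Staller `p`-pass game domination number. -/
noncomputable def gammaPass [Fintype V] (G : SimpleGraph V) (p : ℕ) : ℕ :=
  passVal G true p ∅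

/-- Value (in `ℤ`) of the Dominator `1`-pass game on `G|D` in which the payoff is the
number of moves made minus the number of passes used by Dominator; Dominator minimizes,
Staller maximizes.  `turn = true` means it is Dominator's move, `pass = true` means the
pass is still available to Dominator. -/
noncomputable def domPassVal [Fintype V] (G : SimpleGraph V) : Bool → Bool → Finset V → ℤ
  | turn, pass, D =>
    if h : D = Finset.univ then 0
    else
      have hne : (legalMoves G D).attach.Nonempty :=
        (Finset.attach_nonempty_iff).2 (legalMoves_nonempty G h)
      if turn then
        match pass with
        | false =>
          1 + (legalMoves G D).attach.inf' hne
            (fun v => domPassVal G false false (D ∪ closedNbhd G v.1))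
        | true =>
          min
            (1 + (legalMoves G D).attach.inf' hne
              (fun v => domPassVal G false true (D ∪ closedNbhd G v.1)))
            (domPassVal G false false D - 1)
      else
        1 + (legalMoves G D).attach.sup' hne
          (fun v => domPassVal G true pass (D ∪ closedNbhd G v.1))
  termination_by turn pass D => ((Finset.univ \ D).card, pass.toNat)
  decreasing_by
  · exact Prod.Lex.left _ _ (card_lt_of_legal G v.2)
  · exact Prod.Lex.left _ _ (card_lt_of_legal G v.2)
  · exact Prod.Lex.right _ (by norm_num)
  · exact Prod.Lex.left _ _ (card_lt_of_legal G v.2)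

/-- A graph is a double-Staller graph if, in the Dominator `1`-pass game, Staller has a
strategy forcing at least `γ_g(G) + p` moves, where `p ∈ {0,1}` is the number of passes
used by Dominator.  Equivalently, the optimal value of "moves minus Dominator passes" in
that game is at least `γ_g(G)`. -/
def IsDoubleStaller [Fintype V] (G : SimpleGraph V) : Prop :=
  (gammaG G ∅ : ℤ) ≤ domPassVal G true true ∅

/-- An edge cut of `G`: a set of edges whose removal disconnects `G`. -/
def IsEdgeCut (G : SimpleGraph V) (C : Set (Sym2 V)) : Prop :=
  C ⊆ G.edgeSet ∧ ¬ (G.deleteEdges C).Connected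

/-- A minimal edge cut: no proper subset is an edge cut. -/
def IsMinimalEdgeCut (G : SimpleGraph V) (C : Set (Sym2 V)) : Prop :=
  IsEdgeCut G C ∧ ∀ C' ⊂ C, ¬ IsEdgeCut G C'

/-- A minimum edge cut: an edge cut of the smallest possible cardinality (this
cardinality is the edge-connectivity `κ'(G)`). -/
def IsMinimumEdgeCut (G : SimpleGraph V) (C : Set (Sym2 V)) : Prop :=
  IsEdgeCut G C ∧ ∀ C', IsEdgeCut G C' → C.ncard ≤ C'.ncard

/-- A graph is traceable if it contains a Hamiltonian path. -/
def Traceable (G : SimpleGraph V) : Prop :=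
  ∃ (a b : V) (p : G.Walk a b), p.IsHamiltonian
/-- The disjoint union of two graphs. -/
def sumGraph {V₁ V₂ : Type*} (G₁ : SimpleGraph V₁) (G₂ : SimpleGraph V₂) :
    SimpleGraph (V₁ ⊕ V₂) :=
  SimpleGraph.fromRel (fun a b =>
    match a, b with
    | Sum.inl u, Sum.inl w => G₁.Adj u w
    | Sum.inr u, Sum.inr w => G₂.Adj u w
    | _, _ => False)

/-- The graph `H_{x,3}`: two disjoint copies of `H` (the first copy on `Sum.inl ∘ Sum.inl`,
the second on `Sum.inl ∘ Sum.inr`) joined by a path of length 3 from `x` to its copy `x'`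
through the two internal vertices `y = Sum.inr 0` (adjacent to `x`) and
`y' = Sum.inr 1` (adjacent to `x'`). -/
def Hx3 (H : SimpleGraph V) (x : V) : SimpleGraph ((V ⊕ V) ⊕ Fin 2) :=
  SimpleGraph.fromRel (fun a b =>
    match a, b with
    | Sum.inl (Sum.inl u), Sum.inl (Sum.inl w) => H.Adj u w
    | Sum.inl (Sum.inr u), Sum.inl (Sum.inr w) => H.Adj u w
    | Sum.inl (Sum.inl u), Sum.inr i => u = x ∧ i = 0
    | Sum.inl (Sum.inr u), Sum.inr i => u = x ∧ i = 1
    | Sum.inr i, Sum.inr j => i ≠ j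
    | _, _ => False)

/-- The tree `T_n`: a star `K_{1,n}` with center `Sum.inl ()`, support vertices
`Sum.inr (Sum.inl i)`, and four leaves `Sum.inr (Sum.inr (i, l))` attached to each
support vertex. -/
def Tn (n : ℕ) : SimpleGraph (Unit ⊕ (Fin n ⊕ Fin n × Fin 4)) :=
  SimpleGraph.fromRel (fun a b =>
    match a, b with
    | Sum.inl _, Sum.inr (Sum.inl _) => True
    | Sum.inr (Sum.inl i), Sum.inr (Sum.inr jl) => i = jl.1
    | _, _ => False)

/-- The graph `K_k(H)`: the disjoint union of the complete graph `K_k` (on `Fin k`,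
embedded via `Sum.inl`) and the graph `H` (embedded via `Sum.inr`), together with the
two extra edges `au` and `bv`. -/
def KkH {W : Type*} (k : ℕ) (H : SimpleGraph W) (u v : Fin k) (a b : W) :
    SimpleGraph (Fin k ⊕ W) :=
  SimpleGraph.fromRel (fun s t =>
    match s, t with
    | Sum.inl i, Sum.inl j => i ≠ j
    | Sum.inr w₁, Sum.inr w₂ => H.Adj w₁ w₂
    | Sum.inl i, Sum.inr w => (i = u ∧ w = a) ∨ (i = v ∧ w = b)
    | _, _ => False)

section Test
variable [Fintype V] (G : SimpleGraph V)

lemma gameVal_univ (t : Bool) : gameVal G t Finset.univ = 0 := by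
  rw [gameVal]; simp

lemma gameVal_true_eq {D : Finset V} (h : D ≠ Finset.univ) :
    gameVal G true D = 1 + (legalMoves G D).attach.inf'
      ((Finset.attach_nonempty_iff).2 (legalMoves_nonempty G h))
      (fun v => gameVal G false (D ∪ closedNbhd G v.1)) := by
  rw [gameVal]; simp [h]

lemma gameVal_false_eq {D : Finset V} (h : D ≠ Finset.univ) :
    gameVal G false D = 1 + (legalMoves G D).attach.sup'
      ((Finset.attach_nonempty_iff).2 (legalMoves_nonempty G h))
      (fun v => gameVal G true (D ∪ closedNbhd G v.1)) := by
  rw [gameVal]; simp [h]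

lemma passVal_univ (t : Bool) (p : ℕ) : passVal G t p Finset.univ = 0 := by
  rw [passVal]; simp

lemma passVal_true_eq {D : Finset V} (h : D ≠ Finset.univ) (p : ℕ) :
    passVal G true p D = 1 + (legalMoves G D).attach.inf'
      ((Finset.attach_nonempty_iff).2 (legalMoves_nonempty G h))
      (fun v => passVal G false p (D ∪ closedNbhd G v.1)) := by
  rw [passVal]; simp [h]

lemma passVal_false_zero {D : Finset V} (h : D ≠ Finset.univ) :
    passVal G false 0 D = 1 + (legalMoves G D).attach.sup'
      ((Finset.attach_nonempty_iff).2 (legalMoves_nonempty G h))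
      (fun v => passVal G true 0 (D ∪ closedNbhd G v.1)) := by
  rw [passVal]; simp [h]

lemma passVal_false_succ {D : Finset V} (h : D ≠ Finset.univ) (q : ℕ) :
    passVal G false (q+1) D = max
      (1 + (legalMoves G D).attach.sup'
        ((Finset.attach_nonempty_iff).2 (legalMoves_nonempty G h))
        (fun v => passVal G true (q+1) (D ∪ closedNbhd G v.1)))
      (passVal G true q D) := by
  rw [passVal]; simp [h]

end Test
section Main
variable [Fintype V] (G : SimpleGraph V)

lemma legal_mono {B A : Finset V} (h : B ⊆ A) {v : V}
    (hv : v ∈ legalMoves G A) : v ∈ legalMoves G B := by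
  simp only [legalMoves, Finset.mem_filter, Finset.mem_univ, true_and] at hv ⊢
  exact fun hc => hv (hc.trans h)

lemma card_le_of_subset {B A : Finset V} (h : B ⊆ A) :
    (Finset.univ \ A).card ≤ (Finset.univ \ B).card :=
  Finset.card_le_card (Finset.sdiff_subset_sdiff le_rfl h)

lemma key (n : ℕ) :
    ∀ B : Finset V, (Finset.univ \ B).card < n →
      (∀ A : Finset V, B ⊆ A → ∀ t, gameVal G t A ≤ gameVal G t B) ∧
      gameVal G true B ≤ 1 + gameVal G false B ∧
      gameVal G false B ≤ 1 + gameVal G true B := by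
  induction n with
  | zero => exact fun B h => absurd h (Nat.not_lt_zero _)
  | succ n ih =>
    intro B hB
    have hB' : (Finset.univ \ B).card ≤ n := Nat.lt_succ_iff.mp hB
    -- induction hypotheses specialized
    have ihs : ∀ B' : Finset V, (Finset.univ \ B').card < (Finset.univ \ B).card →
        (∀ A : Finset V, B' ⊆ A → ∀ t, gameVal G t A ≤ gameVal G t B') ∧
        gameVal G true B' ≤ 1 + gameVal G false B' ∧
        gameVal G false B' ≤ 1 + gameVal G true B' :=
      fun B' h => ih B' (lt_of_lt_of_le h hB')
    refine ⟨?_, ?_, ?_⟩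
    · -- continuation principle
      intro A hBA t
      by_cases hA : A = Finset.univ
      · subst hA; rw [gameVal_univ]; exact Nat.zero_le _
      have hBne : B ≠ Finset.univ := fun h => hA (Finset.univ_subset_iff.mp (h ▸ hBA))
      cases t with
      | true =>
        rw [gameVal_true_eq G hBne, gameVal_true_eq G hA]
        obtain ⟨v₀, -, hv₀eq⟩ := Finset.exists_mem_eq_inf'
          ((Finset.attach_nonempty_iff).2 (legalMoves_nonempty G hBne))
          (fun v => gameVal G false (B ∪ closedNbhd G v.1))
        rw [hv₀eq]
        have hv₀B : v₀.1 ∈ legalMoves G B := v₀.2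
        have hcard : (Finset.univ \ (B ∪ closedNbhd G v₀.1)).card < (Finset.univ \ B).card :=
          card_lt_of_legal G hv₀B
        by_cases hvA : v₀.1 ∈ legalMoves G A
        · have h1 : (legalMoves G A).attach.inf'
              ((Finset.attach_nonempty_iff).2 (legalMoves_nonempty G hA))
              (fun v => gameVal G false (A ∪ closedNbhd G v.1))
              ≤ gameVal G false (A ∪ closedNbhd G v₀.1) :=
            Finset.inf'_le _ (Finset.mem_attach _ ⟨v₀.1, hvA⟩)
          have h2 : gameVal G false (A ∪ closedNbhd G v₀.1)
              ≤ gameVal G false (B ∪ closedNbhd G v₀.1) :=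
            (ihs _ hcard).1 _ (Finset.union_subset_union hBA le_rfl) false
          omega
        · -- N[v₀] ⊆ A
          have hsub : closedNbhd G v₀.1 ⊆ A := by
            simp only [legalMoves, Finset.mem_filter, Finset.mem_univ, true_and,
              not_not] at hvA
            exact hvA
          have hBA' : B ∪ closedNbhd G v₀.1 ⊆ A := Finset.union_subset hBA hsub
          have hcardA : (Finset.univ \ A).card < (Finset.univ \ B).card :=
            lt_of_le_of_lt (card_le_of_subset hBA') hcard
          have h1 : gameVal G true A ≤ 1 + gameVal G false A := (ihs A hcardA).2.1
          have h2 : gameVal G false A ≤ gameVal G false (B ∪ closedNbhd G v₀.1) :=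
            (ihs _ hcard).1 A hBA' false
          rw [← gameVal_true_eq G hA]
          omega
      | false =>
        rw [gameVal_false_eq G hBne, gameVal_false_eq G hA]
        have hAne := hA
        refine Nat.add_le_add_left (Finset.sup'_le _ _ ?_) 1
        rintro ⟨v, hvA⟩ -
        have hvB : v ∈ legalMoves G B := legal_mono G hBA hvA
        have hcard : (Finset.univ \ (B ∪ closedNbhd G v)).card < (Finset.univ \ B).card :=
          card_lt_of_legal G hvB
        calc gameVal G true (A ∪ closedNbhd G v)
            ≤ gameVal G true (B ∪ closedNbhd G v) :=
              (ihs _ hcard).1 _ (Finset.union_subset_union hBA le_rfl) true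
          _ ≤ _ := Finset.le_sup' (fun v => gameVal G true (B ∪ closedNbhd G v.1))
              (Finset.mem_attach _ ⟨v, hvB⟩)
    · -- γ_g ≤ 1 + γ_g'
      by_cases hBne : B = Finset.univ
      · subst hBne; rw [gameVal_univ]; exact Nat.zero_le _
      rw [gameVal_true_eq G hBne, gameVal_false_eq G hBne]
      obtain ⟨v₀⟩ := (Finset.attach_nonempty_iff).2 (legalMoves_nonempty G hBne)
      have hcard : (Finset.univ \ (B ∪ closedNbhd G v₀.1)).card < (Finset.univ \ B).card :=
        card_lt_of_legal G v₀.2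
      have h1 : (legalMoves G B).attach.inf' _
          (fun v => gameVal G false (B ∪ closedNbhd G v.1))
          ≤ gameVal G false (B ∪ closedNbhd G v₀.1) :=
        Finset.inf'_le _ (Finset.mem_attach _ v₀)
      have h2 : gameVal G false (B ∪ closedNbhd G v₀.1)
          ≤ 1 + gameVal G true (B ∪ closedNbhd G v₀.1) := (ihs _ hcard).2.2
      have h3 : gameVal G true (B ∪ closedNbhd G v₀.1)
          ≤ (legalMoves G B).attach.sup' _
          (fun v => gameVal G true (B ∪ closedNbhd G v.1)) :=
        Finset.le_sup' (fun v => gameVal G true (B ∪ closedNbhd G v.1))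
          (Finset.mem_attach _ v₀)
      omega
    · -- γ_g' ≤ 1 + γ_g
      by_cases hBne : B = Finset.univ
      · subst hBne; rw [gameVal_univ]; exact Nat.zero_le _
      rw [gameVal_true_eq G hBne, gameVal_false_eq G hBne]
      obtain ⟨w₀, -, hw₀eq⟩ := Finset.exists_mem_eq_inf'
        ((Finset.attach_nonempty_iff).2 (legalMoves_nonempty G hBne))
        (fun v => gameVal G false (B ∪ closedNbhd G v.1))
      rw [hw₀eq]
      have hcardw : (Finset.univ \ (B ∪ closedNbhd G w₀.1)).card < (Finset.univ \ B).card :=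
        card_lt_of_legal G w₀.2
      refine Nat.add_le_add_left ?_ 1
      refine Finset.sup'_le _ _ ?_
      rintro ⟨v, hvB⟩ -
      show gameVal G true (B ∪ closedNbhd G v) ≤ 1 + gameVal G false (B ∪ closedNbhd G w₀.1)
      set X := B ∪ closedNbhd G v with hX
      by_cases hXu : X = Finset.univ
      · rw [hXu, gameVal_univ]; exact Nat.zero_le _
      by_cases hwX : w₀.1 ∈ legalMoves G X
      · rw [gameVal_true_eq G hXu]
        have h1 : (legalMoves G X).attach.inf' _
            (fun u => gameVal G false (X ∪ closedNbhd G u.1))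
            ≤ gameVal G false (X ∪ closedNbhd G w₀.1) :=
          Finset.inf'_le _ (Finset.mem_attach _ ⟨w₀.1, hwX⟩)
        have h2 : gameVal G false (X ∪ closedNbhd G w₀.1)
            ≤ gameVal G false (B ∪ closedNbhd G w₀.1) :=
          (ihs _ hcardw).1 _ (Finset.union_subset_union Finset.subset_union_left le_rfl) false
        omega
      · have hsub : closedNbhd G w₀.1 ⊆ X := by
          simp only [legalMoves, Finset.mem_filter, Finset.mem_univ, true_and,
            not_not] at hwX
          exact hwX
        have hBX : B ∪ closedNbhd G w₀.1 ⊆ X :=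
          Finset.union_subset Finset.subset_union_left hsub
        have h1 : gameVal G true X ≤ gameVal G true (B ∪ closedNbhd G w₀.1) :=
          (ihs _ hcardw).1 X hBX true
        have h2 : gameVal G true (B ∪ closedNbhd G w₀.1)
            ≤ 1 + gameVal G false (B ∪ closedNbhd G w₀.1) := (ihs _ hcardw).2.1
        omega

end Main
section Final
variable [Fintype V] (G : SimpleGraph V)

lemma skipD (D : Finset V) : gameVal G true D ≤ 1 + gameVal G false D :=
  (key G ((Finset.univ \ D).card + 1) D (Nat.lt_succ_self _)).2.1

lemma pass_le (p : ℕ) : ∀ t (D : Finset V), passVal G t p D ≤ gameVal G t D + p := by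
  induction p with
  | zero =>
    suffices h : ∀ n (D : Finset V), (Finset.univ \ D).card < n → ∀ t,
        passVal G t 0 D ≤ gameVal G t D by
      intro t D; simpa using h _ D (Nat.lt_succ_self _) t
    intro n
    induction n with
    | zero => exact fun D h => absurd h (Nat.not_lt_zero _)
    | succ n ih =>
      intro D hD t
      have hD' : (Finset.univ \ D).card ≤ n := Nat.lt_succ_iff.mp hD
      by_cases hDu : D = Finset.univ
      · subst hDu; rw [passVal_univ]; exact Nat.zero_le _
      cases t with
      | true =>
        rw [passVal_true_eq G hDu 0, gameVal_true_eq G hDu]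
        obtain ⟨v₀, -, hv₀eq⟩ := Finset.exists_mem_eq_inf'
          ((Finset.attach_nonempty_iff).2 (legalMoves_nonempty G hDu))
          (fun v => gameVal G false (D ∪ closedNbhd G v.1))
        rw [hv₀eq]
        have h1 : (legalMoves G D).attach.inf' _
            (fun v => passVal G false 0 (D ∪ closedNbhd G v.1))
            ≤ passVal G false 0 (D ∪ closedNbhd G v₀.1) :=
          Finset.inf'_le _ (Finset.mem_attach _ v₀)
        have h2 := ih _ (lt_of_lt_of_le (card_lt_of_legal G v₀.2) hD') false
        omega
      | false =>
        rw [passVal_false_zero G hDu, gameVal_false_eq G hDu]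
        refine Nat.add_le_add_left (Finset.sup'_le _ _ ?_) 1
        rintro ⟨v, hv⟩ -
        calc passVal G true 0 (D ∪ closedNbhd G v)
            ≤ gameVal G true (D ∪ closedNbhd G v) :=
              ih _ (lt_of_lt_of_le (card_lt_of_legal G hv) hD') true
          _ ≤ _ := Finset.le_sup' (fun v => gameVal G true (D ∪ closedNbhd G v.1))
              (Finset.mem_attach _ ⟨v, hv⟩)
  | succ q ihq =>
    suffices h : ∀ n (D : Finset V), (Finset.univ \ D).card < n → ∀ t,
        passVal G t (q+1) D ≤ gameVal G t D + (q+1) by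
      intro t D; exact h _ D (Nat.lt_succ_self _) t
    intro n
    induction n with
    | zero => exact fun D h => absurd h (Nat.not_lt_zero _)
    | succ n ih =>
      intro D hD t
      have hD' : (Finset.univ \ D).card ≤ n := Nat.lt_succ_iff.mp hD
      by_cases hDu : D = Finset.univ
      · subst hDu; rw [passVal_univ]; exact Nat.zero_le _
      cases t with
      | true =>
        rw [passVal_true_eq G hDu (q+1), gameVal_true_eq G hDu]
        obtain ⟨v₀, -, hv₀eq⟩ := Finset.exists_mem_eq_inf'
          ((Finset.attach_nonempty_iff).2 (legalMoves_nonempty G hDu))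
          (fun v => gameVal G false (D ∪ closedNbhd G v.1))
        rw [hv₀eq]
        have h1 : (legalMoves G D).attach.inf' _
            (fun v => passVal G false (q+1) (D ∪ closedNbhd G v.1))
            ≤ passVal G false (q+1) (D ∪ closedNbhd G v₀.1) :=
          Finset.inf'_le _ (Finset.mem_attach _ v₀)
        have h2 := ih _ (lt_of_lt_of_le (card_lt_of_legal G v₀.2) hD') false
        omega
      | false =>
        rw [passVal_false_succ G hDu q, gameVal_false_eq G hDu]
        refine max_le ?_ ?_
        · have hsup : (legalMoves G D).attach.sup'
              ((Finset.attach_nonempty_iff).2 (legalMoves_nonempty G hDu))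
              (fun v => passVal G true (q+1) (D ∪ closedNbhd G v.1))
              ≤ ((legalMoves G D).attach.sup'
              ((Finset.attach_nonempty_iff).2 (legalMoves_nonempty G hDu))
              (fun v => gameVal G true (D ∪ closedNbhd G v.1))) + (q+1) := by
            refine Finset.sup'_le _ _ ?_
            rintro ⟨v, hv⟩ -
            have h1 := ih _ (lt_of_lt_of_le (card_lt_of_legal G hv) hD') true
            have h2 := Finset.le_sup' (fun v => gameVal G true (D ∪ closedNbhd G v.1))
              (Finset.mem_attach (legalMoves G D) ⟨v, hv⟩)
            simp only at h1 h2 ⊢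
            omega
          omega
        · have h1 := ihq true D
          have h2 := skipD G D
          rw [← gameVal_false_eq G hDu]
          omega
end Final

/-- For a graph without isolated vertices, `γ_g^{St,p}(G) ≤ γ_g(G) + p`. -/
theorem stmt3 {V : Type*} [Fintype V] (G : SimpleGraph V)
    (hiso : ∀ v : V, ∃ w, G.Adj v w) (p : ℕ) :
    gammaPass G p ≤ gammaG G ∅ + p := by
  exact pass_le G p true ∅
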